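/- arXiv:1512.06412 — 2 statements merged into one kernel-verified Lean document; each statement's English description precedes it below -/
import Mathlib

section
/- Fix a positive semidefinite matrix Σ_Z ∈ ℝ^{m×m}, a symmetric matrix Σ_X ∈ ℝ^{p×p}, and any matrix Σ_ZX ∈ ℝ^{m×p}. Then the negative log-likelihood function f(S_X, L_X, S_ZX, L_ZX) := − log det(S_X − L_X) + Tr(Σ_X (S_X − L_X)) + 2 Tr(Σ_ZX (S_ZX − L_ZX)ᵀ) + Tr((S_X − L_X)⁻¹ (S_ZX − L_ZX)ᵀ Σ_Z (S_ZX − L_ZX)) is jointly convex on the convex set C := { (S_X, L_X, S_ZX, L_ZX) : S_X and L_X symmetric, S_X − L_X positive definite }. -/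
open Matrix


set_option linter.unusedSectionVars false
set_option maxHeartbeats 1000000

section NegLogLikHelpers
variable {n : Type*} [Fintype n] [DecidableEq n]

private lemma myPosDef_smul {A : Matrix n n ℝ} (hA : A.PosDef) {c : ℝ} (hc : 0 < c) :
    (c • A).PosDef := by
  refine ⟨?_, fun x hx => ?_⟩
  · unfold Matrix.IsHermitian
    rw [conjTranspose_smul, hA.isHermitian.eq]
    simp
  · exact (hA.smul hc).2 hx

private lemma myPosSemidef_smul {A : Matrix n n ℝ} (hA : A.PosSemidef) {c : ℝ} (hc : 0 ≤ c) :
    (c • A).PosSemidef := by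
  refine ⟨?_, fun x => ?_⟩
  · unfold Matrix.IsHermitian
    rw [conjTranspose_smul, hA.isHermitian.eq]
    simp
  · exact (hA.smul hc).2 x

private lemma myCombo_posDef {A B : Matrix n n ℝ} (hA : A.PosDef) (hB : B.PosDef)
    {a b : ℝ} (ha : 0 ≤ a) (hb : 0 ≤ b) (hab : a + b = 1) :
    (a • A + b • B).PosDef := by
  rcases eq_or_lt_of_le ha with h | h
  · have : b = 1 := by linarith
    simp [← h, this, hB]
  · exact (myPosDef_smul hA h).add_posSemidef (myPosSemidef_smul hB.posSemidef hb)

private lemma myTrace_nonneg {A : Matrix n n ℝ} (hA : A.PosSemidef) : 0 ≤ A.trace := by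
  have h : ∀ i, 0 ≤ A i i := by
    intro i
    exact hA.diag_nonneg
  exact Finset.sum_nonneg fun i _ => h i

private lemma myTrace_eq_sum_eigenvalues {A : Matrix n n ℝ} (hA : A.IsHermitian) :
    A.trace = ∑ i, hA.eigenvalues i := by
  rw [hA.trace_eq_sum_eigenvalues]
  simp [RCLike.ofReal_real_eq_id]

private lemma myLogDet_le {A : Matrix n n ℝ} (hA : A.PosSemidef) (hdet : 0 < A.det) :
    Real.log A.det ≤ A.trace - Fintype.card n := by
  have hdet' : A.det = ∏ i, hA.isHermitian.eigenvalues i := by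
    rw [hA.isHermitian.det_eq_prod_eigenvalues]
    simp [RCLike.ofReal_real_eq_id]
  have hne : ∀ i ∈ Finset.univ, hA.isHermitian.eigenvalues i ≠ 0 := by
    intro i _
    have := hdet
    rw [hdet'] at this
    exact Finset.prod_ne_zero_iff.mp this.ne' i (Finset.mem_univ i)
  have hpos : ∀ i, 0 < hA.isHermitian.eigenvalues i := fun i =>
    lt_of_le_of_ne (hA.eigenvalues_nonneg i) (Ne.symm (hne i (Finset.mem_univ i)))
  rw [hdet', Real.log_prod hne, myTrace_eq_sum_eigenvalues hA.isHermitian]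
  have : ∀ i ∈ Finset.univ, Real.log (hA.isHermitian.eigenvalues i)
      ≤ hA.isHermitian.eigenvalues i - 1 :=
    fun i _ => Real.log_le_sub_one_of_pos (hpos i)
  calc ∑ i, Real.log (hA.isHermitian.eigenvalues i)
      ≤ ∑ i, (hA.isHermitian.eigenvalues i - 1) := Finset.sum_le_sum this
    _ = (∑ i, hA.isHermitian.eigenvalues i) - Fintype.card n := by
        rw [Finset.sum_sub_distrib]
        simp [Finset.card_univ]

private lemma myLogDet_grad {A W : Matrix n n ℝ} (hA : A.PosDef) (hW : W.PosDef) :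
    Real.log A.det - Real.log W.det ≤ (W⁻¹ * A).trace - Fintype.card n := by
  have hWinv : (W⁻¹).PosDef := hW.inv
  set S : Matrix n n ℝ := (open scoped MatrixOrder in CFC.sqrt W⁻¹) with hSdef
  have hSpsd : S.PosSemidef := (open scoped MatrixOrder in (CFC.sqrt_nonneg W⁻¹).posSemidef)
  have hSS : S * S = W⁻¹ :=
    (open scoped MatrixOrder in CFC.sqrt_mul_sqrt_self W⁻¹ hWinv.posSemidef.nonneg)
  have hSH : Sᴴ = S := hSpsd.isHermitian.eq
  set M : Matrix n n ℝ := S * A * S with hMdef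
  have hMpsd : M.PosSemidef := by
    have := hA.posSemidef.conjTranspose_mul_mul_same S
    rwa [hSH] at this
  have hdetW : 0 < W.det := hW.det_pos
  have hdetWinv : 0 < W⁻¹.det := hWinv.det_pos
  have hdetM : M.det = A.det * W⁻¹.det := by
    rw [hMdef, det_mul, det_mul, ← hSS, det_mul]; ring
  have hdetMpos : 0 < M.det := by rw [hdetM]; exact mul_pos hA.det_pos hdetWinv
  have htrM : M.trace = (W⁻¹ * A).trace := by
    rw [hMdef, trace_mul_comm (S * A) S, ← Matrix.mul_assoc, hSS]
  have h1 := myLogDet_le hMpsd hdetMpos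
  rw [hdetM, Real.log_mul hA.det_pos.ne' hdetWinv.ne', htrM] at h1
  have hlogWinv : Real.log W⁻¹.det = - Real.log W.det := by
    rw [det_nonsing_inv, Ring.inverse_eq_inv', Real.log_inv]
  linarith [h1, hlogWinv ▸ h1]

end NegLogLikHelpers

section NegLogLikHelpers2
variable {p m : Type*} [Fintype p] [DecidableEq p] [Fintype m] [DecidableEq m]

private lemma myKeyId {A : Matrix p p ℝ} (hA : A.PosDef) (hAs : Aᵀ = A)
    {S : Matrix m m ℝ} (hS : Sᵀ = S) (B W : Matrix m p ℝ) :
    (A⁻¹ * (B - W * A)ᵀ * S * (B - W * A)).trace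
      = (A⁻¹ * Bᵀ * S * B).trace - 2 * (Wᵀ * S * B).trace + (A * Wᵀ * S * W).trace := by
  have hu : IsUnit A.det := hA.det_pos.ne'.isUnit
  have h1 : A⁻¹ * A = 1 := nonsing_inv_mul A hu
  have h2 : A * A⁻¹ = 1 := mul_nonsing_inv A hu
  have e1 : (B - W * A)ᵀ = Bᵀ - A * Wᵀ := by rw [transpose_sub, transpose_mul, hAs]
  rw [e1]
  simp only [Matrix.mul_sub, Matrix.sub_mul, trace_sub]
  have T21 : A⁻¹ * (A * Wᵀ) * S * B = Wᵀ * S * B := by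
    rw [← Matrix.mul_assoc A⁻¹ A Wᵀ, h1, Matrix.one_mul]
  have T12 : (A⁻¹ * Bᵀ * S * (W * A)).trace = (Wᵀ * S * B).trace := by
    rw [← Matrix.mul_assoc, trace_mul_comm (A⁻¹ * Bᵀ * S * W) A]
    rw [show A * (A⁻¹ * Bᵀ * S * W) = A * A⁻¹ * (Bᵀ * S * W) by
      simp only [Matrix.mul_assoc], h2, Matrix.one_mul,
      ← trace_transpose (Bᵀ * S * W), transpose_mul, transpose_mul, transpose_transpose, hS,
      Matrix.mul_assoc, ← Matrix.mul_assoc]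
  have T22 : (A⁻¹ * (A * Wᵀ) * S * (W * A)).trace = (A * Wᵀ * S * W).trace := by
    rw [← Matrix.mul_assoc A⁻¹ A Wᵀ, h1, Matrix.one_mul, ← Matrix.mul_assoc,
      trace_mul_comm (Wᵀ * S * W) A]
    simp only [Matrix.mul_assoc]
  rw [T21, T12, T22]
  ring

private lemma myQuadNonneg {A : Matrix p p ℝ} (hA : A.PosDef)
    {S : Matrix m m ℝ} (hS : S.PosSemidef) (D : Matrix m p ℝ) :
    0 ≤ (A⁻¹ * Dᵀ * S * D).trace := by
  obtain ⟨C, hC⟩ : ∃ C : Matrix m m ℝ, S = Cᴴ * C :=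
    by
      open scoped MatrixOrder in
      (refine ⟨CFC.sqrt S, ?_⟩
       have hH : (CFC.sqrt S)ᴴ = CFC.sqrt S :=
         (Matrix.LE.le.posSemidef (CFC.sqrt_nonneg S)).isHermitian.eq
       rw [hH, CFC.sqrt_mul_sqrt_self S hS.nonneg])
  have e : A⁻¹ * Dᵀ * S * D = A⁻¹ * ((C * D)ᴴ * (C * D)) := by
    rw [hC, conjTranspose_mul]
    rw [show (D : Matrix m p ℝ)ᴴ = Dᵀ from conjTranspose_eq_transpose_of_trivial D]
    simp only [Matrix.mul_assoc]
  rw [e, ← Matrix.mul_assoc, trace_mul_cycle A⁻¹ (C * D)ᴴ (C * D)]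
  exact myTrace_nonneg (hA.inv.posSemidef.mul_mul_conjTranspose_same (C * D))

private lemma myFracConvex {A₁ A₂ : Matrix p p ℝ} (hA₁ : A₁.PosDef) (hA₂ : A₂.PosDef)
    (hA₁s : A₁ᵀ = A₁) (hA₂s : A₂ᵀ = A₂)
    {S : Matrix m m ℝ} (hS : S.PosSemidef) (B₁ B₂ : Matrix m p ℝ)
    {a b : ℝ} (ha : 0 ≤ a) (hb : 0 ≤ b) (hab : a + b = 1)
    (hA : (a • A₁ + b • A₂).PosDef) :
    ((a • A₁ + b • A₂)⁻¹ * (a • B₁ + b • B₂)ᵀ * S * (a • B₁ + b • B₂)).trace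
      ≤ a * (A₁⁻¹ * B₁ᵀ * S * B₁).trace + b * (A₂⁻¹ * B₂ᵀ * S * B₂).trace := by
  set A := a • A₁ + b • A₂ with hAdef
  set B := a • B₁ + b • B₂ with hBdef
  have hAs : Aᵀ = A := by rw [hAdef, transpose_add, transpose_smul, transpose_smul, hA₁s, hA₂s]
  have hSs : Sᵀ = S := by
    have h := hS.isHermitian.eq
    rwa [conjTranspose_eq_transpose_of_trivial] at h
  set W := B * A⁻¹ with hWdef
  have hWA : W * A = B := by
    rw [hWdef, Matrix.mul_assoc, nonsing_inv_mul A hA.det_pos.ne'.isUnit, Matrix.mul_one]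
  have hexact : (A⁻¹ * Bᵀ * S * B).trace
      = 2 * (Wᵀ * S * B).trace - (A * Wᵀ * S * W).trace := by
    have := myKeyId hA hAs hSs B W
    rw [hWA, sub_self] at this
    simp only [transpose_zero, Matrix.mul_zero, Matrix.zero_mul, trace_zero] at this
    linarith
  have h1 : 2 * (Wᵀ * S * B₁).trace - (A₁ * Wᵀ * S * W).trace ≤ (A₁⁻¹ * B₁ᵀ * S * B₁).trace := by
    have hid := myKeyId hA₁ hA₁s hSs B₁ W
    have hnn := myQuadNonneg hA₁ hS (B₁ - W * A₁)
    rw [hid] at hnn; linarith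
  have h2 : 2 * (Wᵀ * S * B₂).trace - (A₂ * Wᵀ * S * W).trace ≤ (A₂⁻¹ * B₂ᵀ * S * B₂).trace := by
    have hid := myKeyId hA₂ hA₂s hSs B₂ W
    have hnn := myQuadNonneg hA₂ hS (B₂ - W * A₂)
    rw [hid] at hnn; linarith
  have lin1 : (Wᵀ * S * B).trace = a * (Wᵀ * S * B₁).trace + b * (Wᵀ * S * B₂).trace := by
    rw [hBdef, Matrix.mul_add, Matrix.mul_smul, Matrix.mul_smul, trace_add, trace_smul, trace_smul]
    simp [smul_eq_mul]
  have lin2 : (A * Wᵀ * S * W).trace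
      = a * (A₁ * Wᵀ * S * W).trace + b * (A₂ * Wᵀ * S * W).trace := by
    rw [hAdef, Matrix.add_mul, Matrix.smul_mul, Matrix.smul_mul, Matrix.add_mul, Matrix.smul_mul,
      Matrix.smul_mul, Matrix.add_mul, Matrix.smul_mul, Matrix.smul_mul, trace_add, trace_smul,
      trace_smul]
    simp [smul_eq_mul]
  rw [hexact, lin1, lin2]
  nlinarith [h1, h2]

end NegLogLikHelpers2

/-- For a fixed positive semidefinite `Σ_Z`, symmetric `Σ_X` and arbitrary
`Σ_ZX`, the negative log-likelihood
`f(S_X, L_X, S_ZX, L_ZX) = − log det(S_X − L_X) + Tr(Σ_X (S_X − L_X))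
  + 2 Tr(Σ_ZX (S_ZX − L_ZX)ᵀ) + Tr((S_X − L_X)⁻¹ (S_ZX − L_ZX)ᵀ Σ_Z (S_ZX − L_ZX))`
is jointly convex on the convex set
`C := {(S_X, L_X, S_ZX, L_ZX) : S_X, L_X symmetric, S_X − L_X ≻ 0}`. -/
theorem negloglik_jointly_convex (p m : ℕ) (hp : 1 ≤ p) (hm : 1 ≤ m)
    (SigZ : Matrix (Fin m) (Fin m) ℝ) (hSigZ : SigZ.PosSemidef)
    (SigX : Matrix (Fin p) (Fin p) ℝ) (hSigX : SigX.IsSymm)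
    (SigZX : Matrix (Fin m) (Fin p) ℝ) :
    ConvexOn ℝ
      {q : Matrix (Fin p) (Fin p) ℝ × Matrix (Fin p) (Fin p) ℝ ×
          Matrix (Fin m) (Fin p) ℝ × Matrix (Fin m) (Fin p) ℝ |
        q.1.IsSymm ∧ q.2.1.IsSymm ∧ (q.1 - q.2.1).PosDef}
      (fun q =>
        -Real.log (q.1 - q.2.1).det
        + (SigX * (q.1 - q.2.1)).trace
        + 2 * (SigZX * (q.2.2.1 - q.2.2.2)ᵀ).trace
        + ((q.1 - q.2.1)⁻¹ * (q.2.2.1 - q.2.2.2)ᵀ * SigZ * (q.2.2.1 - q.2.2.2)).trace)  := by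
  constructor
  · intro x hx y hy a b ha hb hab
    obtain ⟨hx1, hx2, hx3⟩ := hx
    obtain ⟨hy1, hy2, hy3⟩ := hy
    refine ⟨?_, ?_, ?_⟩
    · show ((a • x + b • y).1).IsSymm
      simp only [Prod.fst_add, Prod.smul_fst]
      exact (hx1.smul a).add (hy1.smul b)
    · show ((a • x + b • y).2.1).IsSymm
      simp only [Prod.snd_add, Prod.smul_snd, Prod.fst_add, Prod.smul_fst]
      exact (hx2.smul a).add (hy2.smul b)
    · show ((a • x + b • y).1 - (a • x + b • y).2.1).PosDef
      simp only [Prod.fst_add, Prod.smul_fst, Prod.snd_add, Prod.smul_snd]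
      have e : (a • x.1 + b • y.1) - (a • x.2.1 + b • y.2.1)
          = a • (x.1 - x.2.1) + b • (y.1 - y.2.1) := by module
      rw [e]
      exact myCombo_posDef hx3 hy3 ha hb hab
  · intro x hx y hy a b ha hb hab
    obtain ⟨hx1, hx2, hx3⟩ := hx
    obtain ⟨hy1, hy2, hy3⟩ := hy
    simp only [smul_eq_mul]
    set A₁ := x.1 - x.2.1 with hA₁def
    set A₂ := y.1 - y.2.1 with hA₂def
    set B₁ := x.2.2.1 - x.2.2.2 with hB₁def
    set B₂ := y.2.2.1 - y.2.2.2 with hB₂def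
    have hA₁s : A₁ᵀ = A₁ := by
      have h := hx3.isHermitian.eq
      rwa [conjTranspose_eq_transpose_of_trivial] at h
    have hA₂s : A₂ᵀ = A₂ := by
      have h := hy3.isHermitian.eq
      rwa [conjTranspose_eq_transpose_of_trivial] at h
    simp only [Prod.fst_add, Prod.smul_fst, Prod.snd_add, Prod.smul_snd]
    have eA : (a • x.1 + b • y.1) - (a • x.2.1 + b • y.2.1) = a • A₁ + b • A₂ := by
      rw [hA₁def, hA₂def]; module
    have eB : (a • x.2.2.1 + b • y.2.2.1) - (a • x.2.2.2 + b • y.2.2.2)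
        = a • B₁ + b • B₂ := by rw [hB₁def, hB₂def]; module
    rw [eA, eB]
    have hA : (a • A₁ + b • A₂).PosDef := myCombo_posDef hx3 hy3 ha hb hab
    have hlog : -Real.log (a • A₁ + b • A₂).det
        ≤ a * (-Real.log A₁.det) + b * (-Real.log A₂.det) := by
      have h1 := myLogDet_grad hx3 hA
      have h2 := myLogDet_grad hy3 hA
      have htr : a * ((a • A₁ + b • A₂)⁻¹ * A₁).trace
          + b * ((a • A₁ + b • A₂)⁻¹ * A₂).trace = Fintype.card (Fin p) := by
        have : a • ((a • A₁ + b • A₂)⁻¹ * A₁) + b • ((a • A₁ + b • A₂)⁻¹ * A₂)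
            = (1 : Matrix (Fin p) (Fin p) ℝ) := by
          rw [← Matrix.mul_smul, ← Matrix.mul_smul, ← Matrix.mul_add]
          exact nonsing_inv_mul _ hA.det_pos.ne'.isUnit
        have := congrArg Matrix.trace this
        rwa [trace_add, trace_smul, trace_smul, trace_one, smul_eq_mul, smul_eq_mul] at this
      have hsum : a * Real.log (a • A₁ + b • A₂).det + b * Real.log (a • A₁ + b • A₂).det
          = Real.log (a • A₁ + b • A₂).det := by rw [← add_mul, hab, one_mul]
      have hcard : a * (Fintype.card (Fin p) : ℝ) + b * (Fintype.card (Fin p) : ℝ)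
          = (Fintype.card (Fin p) : ℝ) := by rw [← add_mul, hab, one_mul]
      nlinarith [mul_le_mul_of_nonneg_left h1 ha, mul_le_mul_of_nonneg_left h2 hb]
    have hlin1 : (SigX * (a • A₁ + b • A₂)).trace
        = a * (SigX * A₁).trace + b * (SigX * A₂).trace := by
      rw [Matrix.mul_add, Matrix.mul_smul, Matrix.mul_smul, trace_add, trace_smul, trace_smul,
        smul_eq_mul, smul_eq_mul]
    have hlin2 : (SigZX * (a • B₁ + b • B₂)ᵀ).trace
        = a * (SigZX * B₁ᵀ).trace + b * (SigZX * B₂ᵀ).trace := by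
      rw [transpose_add, transpose_smul, transpose_smul, Matrix.mul_add, Matrix.mul_smul,
        Matrix.mul_smul, trace_add, trace_smul, trace_smul, smul_eq_mul, smul_eq_mul]
    have hquad := myFracConvex hx3 hy3 hA₁s hA₂s hSigZ B₁ B₂ ha hb hab hA
    linarith [hlog, hquad]
end

section
/- Fix λ > 0, γ > 0, a positive semidefinite matrix Σ_Z ∈ ℝ^{m×m}, a symmetric matrix Σ_X ∈ ℝ^{p×p}, and Σ_ZX ∈ ℝ^{m×p}. Then the full objective of the estimator, F(S_X, L_X, S_ZX, L_ZX) := − log det(S_X − L_X) + Tr(Σ_X (S_X − L_X)) + 2 Tr(Σ_ZX (S_ZX − L_ZX)ᵀ) + Tr((S_X − L_X)⁻¹ (S_ZX − L_ZX)ᵀ Σ_Z (S_ZX − L_ZX)) + λ ( γ ‖S‖₁ + ‖L‖_* ), where S ∈ ℝ^{(p+m)×p} is the matrix obtained by stacking S_X on top of S_ZX and L ∈ ℝ^{(p+m)×p} is obtained by stacking L_X on top of L_ZX, is convex on the convex set C := { (S_X, L_X, S_ZX, L_ZX) : S_X and L_X symmetric, S_X − L_X positive definite }. -/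
open Matrix

/-- The nuclear norm of a real matrix `A`: the sum of its singular values, i.e.
`Tr((AᵀA)^{1/2})` with `(AᵀA)^{1/2}` the positive semidefinite square root of `AᵀA`. -/
noncomputable def nuclearNorm {α β : Type*} [Fintype α] [Fintype β] [DecidableEq β]
    (A : Matrix α β ℝ) : ℝ :=
  ((Matrix.posSemidef_conjTranspose_mul_self A).1.eigenvectorUnitary.1 *
    diagonal ((RCLike.ofReal : ℝ → ℝ) ∘ (fun i => Real.sqrt ((Matrix.posSemidef_conjTranspose_mul_self A).1.eigenvalues i))) *
    (star (Matrix.posSemidef_conjTranspose_mul_self A).1.eigenvectorUnitary : Matrix β β ℝ)).trace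


section basic
variable {n : Type*} [Fintype n]

lemma psd_smul {M : Matrix n n ℝ} (hM : M.PosSemidef) {c : ℝ} (hc : 0 ≤ c) :
    (c • M).PosSemidef := by
  exact hM.smul hc

lemma pd_smul {M : Matrix n n ℝ} (hM : M.PosDef) {c : ℝ} (hc : 0 < c) :
    (c • M).PosDef := by
  exact hM.smul hc

lemma pd_combo [DecidableEq n] {A B : Matrix n n ℝ} (hA : A.PosDef) (hB : B.PosDef)
    {a b : ℝ} (ha : 0 ≤ a) (hb : 0 ≤ b) (hab : a + b = 1) :
    (a • A + b • B).PosDef := by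
  rcases eq_or_lt_of_le ha with h | h
  · have hb1 : b = 1 := by linarith
    simp [← h, hb1, hB]
  · exact (pd_smul hA h).add_posSemidef (psd_smul hB.posSemidef hb)

lemma psd_trace_nonneg {M : Matrix n n ℝ} (hM : M.PosSemidef) [DecidableEq n] :
    0 ≤ M.trace := by
  rw [Matrix.trace]
  apply Finset.sum_nonneg
  intro i _
  exact hM.diag_nonneg
end basic

variable {n : Type*} [Fintype n] [DecidableEq n]

lemma trace_eq_sum_eigenvalues {M : Matrix n n ℝ} (hM : M.IsHermitian) :
    M.trace = ∑ i, hM.eigenvalues i := by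
  nth_rewrite 1 [hM.spectral_theorem]
  rw [Unitary.conjStarAlgAut_apply]
  rw [Matrix.trace_mul_cycle]
  rw [Unitary.coe_star_mul_self, one_mul, Matrix.trace_diagonal]
  simp [RCLike.ofReal_real_eq_id]

lemma logdet_le_trace {M : Matrix n n ℝ} (hM : M.PosDef) :
    Real.log M.det ≤ M.trace - Fintype.card n := by
  have hdet : M.det = ∏ i, hM.1.eigenvalues i := by
    rw [hM.isHermitian.det_eq_prod_eigenvalues]
    simp [RCLike.ofReal_real_eq_id]
  rw [hdet, Real.log_prod (fun i _ => (hM.eigenvalues_pos i).ne'),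
    trace_eq_sum_eigenvalues hM.1]
  have : ∀ i ∈ (Finset.univ : Finset n), Real.log (hM.1.eigenvalues i) ≤ hM.1.eigenvalues i - 1 :=
    fun i _ => Real.log_le_sub_one_of_pos (hM.eigenvalues_pos i)
  calc ∑ i, Real.log (hM.1.eigenvalues i) ≤ ∑ i, (hM.1.eigenvalues i - 1) :=
        Finset.sum_le_sum this
    _ = (∑ i, hM.1.eigenvalues i) - Fintype.card n := by
        rw [Finset.sum_sub_distrib]; simp

open scoped MatrixOrder

lemma logdet_affine_bound {A M : Matrix n n ℝ} (hA : A.PosDef) (hM : M.PosDef) :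
    Real.log A.det ≤ Real.log M.det + (M⁻¹ * A).trace - Fintype.card n := by
  have hMinv : M⁻¹.PosDef := hM.inv
  set S := CFC.sqrt M⁻¹ with hSdef
  have hS : S.PosSemidef := (CFC.sqrt_nonneg M⁻¹).posSemidef
  have hSS : S * S = M⁻¹ := CFC.sqrt_mul_sqrt_self M⁻¹ hMinv.posSemidef.nonneg
  have hSherm : Sᴴ = S := hS.1
  have hNpsd : (S * A * S).PosSemidef := by
    have := hA.posSemidef.mul_mul_conjTranspose_same S
    rwa [hSherm] at this
  have hdetS : S.det * S.det = M.det⁻¹ := by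
    rw [← Matrix.det_mul, hSS, Matrix.det_nonsing_inv, Ring.inverse_eq_inv']
  have hdetM : 0 < M.det := hM.det_pos
  have hdetA : 0 < A.det := hA.det_pos
  have hdetN : (S * A * S).det = A.det * M.det⁻¹ := by
    rw [Matrix.det_mul, Matrix.det_mul]
    rw [mul_comm S.det A.det, mul_assoc, hdetS]
  have hNdetpos : 0 < (S * A * S).det := by
    rw [hdetN]; positivity
  have hNpd : (S * A * S).PosDef := by
    refine Matrix.PosDef.of_dotProduct_mulVec_pos hNpsd.1 (fun x hx => ?_)
    rcases lt_or_eq_of_le (hNpsd.dotProduct_mulVec_nonneg x) with h | h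
    · exact h
    · exfalso
      have hker := (hNpsd.dotProduct_mulVec_zero_iff x).mp h.symm
      have : x = 0 := by
        have hunit : IsUnit (S * A * S) := isUnit_iff_isUnit_det _ |>.2 hNdetpos.ne'.isUnit
        have hinj := Matrix.mulVec_injective_iff_isUnit.mpr hunit
        have : (S * A * S) *ᵥ x = (S * A * S) *ᵥ 0 := by simpa using hker
        exact hinj this
      exact hx this
  have hlog := logdet_le_trace hNpd
  have htr : (S * A * S).trace = (M⁻¹ * A).trace := by
    rw [Matrix.trace_mul_comm (S * A) S, ← mul_assoc, hSS]
  rw [hdetN, Real.log_mul hdetA.ne' (by positivity), Real.log_inv, htr] at hlog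
  linarith

lemma logdet_concave {A B : Matrix n n ℝ} (hA : A.PosDef) (hB : B.PosDef)
    {a b : ℝ} (ha : 0 ≤ a) (hb : 0 ≤ b) (hab : a + b = 1) :
    a * Real.log A.det + b * Real.log B.det ≤ Real.log (a • A + b • B).det := by
  rcases eq_or_lt_of_le ha with h | hapos
  · have hb1 : b = 1 := by linarith
    simp [← h, hb1]
  rcases eq_or_lt_of_le hb with h | hbpos
  · have ha1 : a = 1 := by linarith
    simp [← h, ha1]
  have hM : (a • A + b • B).PosDef := pd_combo hA hB ha hb hab
  have h1 := logdet_affine_bound hA hM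
  have h2 := logdet_affine_bound hB hM
  set M := a • A + b • B
  have htr : a * (M⁻¹ * A).trace + b * (M⁻¹ * B).trace = Fintype.card n := by
    have : a • (M⁻¹ * A) + b • (M⁻¹ * B) = M⁻¹ * M := by
      rw [mul_add, Matrix.mul_smul, Matrix.mul_smul]
    have h3 : M⁻¹ * M = 1 := Matrix.nonsing_inv_mul M hM.det_pos.ne'.isUnit
    have := congrArg Matrix.trace this
    rw [h3, Matrix.trace_add, Matrix.trace_smul, Matrix.trace_smul, Matrix.trace_one] at this
    simpa [smul_eq_mul] using this
  have e1 := mul_le_mul_of_nonneg_left h1 ha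
  have e2 := mul_le_mul_of_nonneg_left h2 hb
  have e3 : a * Real.log M.det + b * Real.log M.det = Real.log M.det := by
    rw [← add_mul, hab, one_mul]
  have e4 : a * (Fintype.card n : ℝ) + b * (Fintype.card n : ℝ) = (Fintype.card n : ℝ) := by
    rw [← add_mul, hab, one_mul]
  linarith [e1, e2, e3, e4, htr]
section frac
variable {n : Type*} [Fintype n] [DecidableEq n] {o : Type*} [Fintype o] [DecidableEq o]

omit [DecidableEq n] in
lemma transpose_eq_of_posDef {A : Matrix n n ℝ} (hA : A.PosDef) : Aᵀ = A := by
  rw [← conjTranspose_eq_transpose_of_trivial, hA.isHermitian.eq]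

omit [DecidableEq o] in
lemma sg_transpose {Sg : Matrix o o ℝ} (hSg : Sg.PosSemidef) : Sgᵀ = Sg := by
  rw [← conjTranspose_eq_transpose_of_trivial, hSg.isHermitian.eq]

lemma frac_nonneg {A : Matrix n n ℝ} (hA : A.PosDef) {Sg : Matrix o o ℝ} (hSg : Sg.PosSemidef)
    (Y : Matrix o n ℝ) : 0 ≤ (A⁻¹ * Yᵀ * Sg * Y).trace := by
  obtain ⟨C, hC⟩ : ∃ C : Matrix o o ℝ, Sg = Cᴴ * C := ⟨CFC.sqrt Sg, by
    rw [(CFC.sqrt_nonneg Sg).posSemidef.1.eq, CFC.sqrt_mul_sqrt_self Sg hSg.nonneg]⟩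
  rw [conjTranspose_eq_transpose_of_trivial] at hC
  have h1 : A⁻¹ * Yᵀ * Sg * Y = A⁻¹ * (C * Y)ᵀ * (C * Y) := by
    rw [hC, Matrix.transpose_mul]
    simp only [Matrix.mul_assoc]
  rw [h1, Matrix.trace_mul_comm (A⁻¹ * (C * Y)ᵀ) (C * Y), ← Matrix.mul_assoc]
  have hpsd : ((C * Y) * A⁻¹ * (C * Y)ᵀ).PosSemidef := by
    have := hA.inv.posSemidef.mul_mul_conjTranspose_same (C * Y)
    rwa [conjTranspose_eq_transpose_of_trivial] at this
  exact psd_trace_nonneg hpsd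

lemma frac_lb {A : Matrix n n ℝ} (hA : A.PosDef) {Sg : Matrix o o ℝ} (hSg : Sg.PosSemidef)
    (B U : Matrix o n ℝ) :
    2 * (Bᵀ * Sg * U).trace - (Uᵀ * Sg * U * A).trace ≤ (A⁻¹ * Bᵀ * Sg * B).trace := by
  have key := frac_nonneg hA hSg (B - U * A)
  have hAinv : A⁻¹ * A = 1 := Matrix.nonsing_inv_mul A hA.det_pos.ne'.isUnit
  have hAinv' : A * A⁻¹ = 1 := Matrix.mul_nonsing_inv A hA.det_pos.ne'.isUnit
  have hexp : A⁻¹ * (B - U * A)ᵀ * Sg * (B - U * A)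
      = A⁻¹ * (Bᵀ * (Sg * B)) - A⁻¹ * (Bᵀ * (Sg * (U * A))) - A⁻¹ * (A * (Uᵀ * (Sg * B)))
        + A⁻¹ * (A * (Uᵀ * (Sg * (U * A)))) := by
    rw [Matrix.transpose_sub, Matrix.transpose_mul, transpose_eq_of_posDef hA]
    simp only [Matrix.mul_sub, Matrix.sub_mul, Matrix.mul_assoc]
    abel
  simp only [← Matrix.mul_assoc] at hexp
  rw [hexp] at key
  simp only [← Matrix.mul_assoc, hAinv, Matrix.one_mul] at key
  rw [Matrix.trace_add, Matrix.trace_sub, Matrix.trace_sub] at key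
  have t2 : (A⁻¹ * Bᵀ * Sg * U * A).trace = (Bᵀ * Sg * U).trace := by
    rw [Matrix.trace_mul_comm (A⁻¹ * Bᵀ * Sg * U) A]
    simp only [← Matrix.mul_assoc]
    rw [hAinv', Matrix.one_mul]
  have t3 : (Uᵀ * Sg * B).trace = (Bᵀ * Sg * U).trace := by
    rw [← Matrix.trace_transpose (Uᵀ * Sg * B)]
    simp only [Matrix.transpose_mul, Matrix.transpose_transpose, sg_transpose hSg]
    rw [Matrix.mul_assoc]
  rw [t2, t3] at key
  linarith

lemma frac_convex {A₁ A₂ : Matrix n n ℝ} (hA₁ : A₁.PosDef) (hA₂ : A₂.PosDef)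
    {Sg : Matrix o o ℝ} (hSg : Sg.PosSemidef) (B₁ B₂ : Matrix o n ℝ)
    {a b : ℝ} (ha : 0 ≤ a) (hb : 0 ≤ b) (hab : a + b = 1) :
    ((a • A₁ + b • A₂)⁻¹ * (a • B₁ + b • B₂)ᵀ * Sg * (a • B₁ + b • B₂)).trace
      ≤ a * (A₁⁻¹ * B₁ᵀ * Sg * B₁).trace + b * (A₂⁻¹ * B₂ᵀ * Sg * B₂).trace := by
  rcases eq_or_lt_of_le ha with h | hapos
  · have hb1 : b = 1 := by linarith
    simp [← h, hb1]
  rcases eq_or_lt_of_le hb with h | hbpos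
  · have ha1 : a = 1 := by linarith
    simp [← h, ha1]
  set M := a • A₁ + b • A₂ with hMdef
  set Bm := a • B₁ + b • B₂ with hBmdef
  have hM : M.PosDef := pd_combo hA₁ hA₂ ha hb hab
  have hMinv : M⁻¹ * M = 1 := Matrix.nonsing_inv_mul M hM.det_pos.ne'.isUnit
  have hMinvT : (M⁻¹)ᵀ = M⁻¹ := by
    rw [Matrix.transpose_nonsing_inv, transpose_eq_of_posDef hM]
  set U := Bm * M⁻¹ with hUdef
  have h1 := frac_lb hA₁ hSg B₁ U
  have h2 := frac_lb hA₂ hSg B₂ U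
  have e1 : a * (B₁ᵀ * Sg * U).trace + b * (B₂ᵀ * Sg * U).trace = (Bmᵀ * Sg * U).trace := by
    simp only [hBmdef, Matrix.transpose_add, Matrix.transpose_smul, Matrix.add_mul,
      Matrix.smul_mul, Matrix.trace_add, Matrix.trace_smul, smul_eq_mul]
  have e2 : a * (Uᵀ * Sg * U * A₁).trace + b * (Uᵀ * Sg * U * A₂).trace
      = (Uᵀ * Sg * U * M).trace := by
    simp only [hMdef, Matrix.mul_add, Matrix.mul_smul, Matrix.trace_add, Matrix.trace_smul,
      smul_eq_mul]
  have e3 : (Bmᵀ * Sg * U).trace = (M⁻¹ * Bmᵀ * Sg * Bm).trace := by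
    rw [hUdef, ← Matrix.mul_assoc, Matrix.trace_mul_comm (Bmᵀ * Sg * Bm) M⁻¹]
    simp only [← Matrix.mul_assoc]
  have e4 : (Uᵀ * Sg * U * M).trace = (M⁻¹ * Bmᵀ * Sg * Bm).trace := by
    rw [hUdef, Matrix.transpose_mul, hMinvT]
    have h5 : M⁻¹ * Bmᵀ * Sg * (Bm * M⁻¹) * M = M⁻¹ * Bmᵀ * Sg * Bm := by
      simp only [Matrix.mul_assoc, hMinv]
      simp [Matrix.mul_assoc]
    simp only [Matrix.mul_assoc] at h5 ⊢
    rw [h5]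
  have hcomb : a * (2 * (B₁ᵀ * Sg * U).trace - (Uᵀ * Sg * U * A₁).trace)
      + b * (2 * (B₂ᵀ * Sg * U).trace - (Uᵀ * Sg * U * A₂).trace)
      = (M⁻¹ * Bmᵀ * Sg * Bm).trace := by
    ring_nf
    nlinarith [e1, e2, e3, e4]
  calc (M⁻¹ * Bmᵀ * Sg * Bm).trace
      = a * (2 * (B₁ᵀ * Sg * U).trace - (Uᵀ * Sg * U * A₁).trace)
        + b * (2 * (B₂ᵀ * Sg * U).trace - (Uᵀ * Sg * U * A₂).trace) := hcomb.symm
    _ ≤ a * (A₁⁻¹ * B₁ᵀ * Sg * B₁).trace + b * (A₂⁻¹ * B₂ᵀ * Sg * B₂).trace := by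
        apply add_le_add
        · exact mul_le_mul_of_nonneg_left h1 ha
        · exact mul_le_mul_of_nonneg_left h2 hb
end frac
section nuclear
variable {α β : Type*} [Fintype α] [Fintype β] [DecidableEq β]
variable (A : Matrix α β ℝ)


private lemma hdiag : ((Matrix.posSemidef_conjTranspose_mul_self A).1.eigenvectorUnitary :
      Matrix β β ℝ)ᵀ * (Aᵀ * A) *
      ((Matrix.posSemidef_conjTranspose_mul_self A).1.eigenvectorUnitary : Matrix β β ℝ)
    = Matrix.diagonal ((Matrix.posSemidef_conjTranspose_mul_self A).1.eigenvalues) := by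
  have h : (star ((Matrix.posSemidef_conjTranspose_mul_self A).1.eigenvectorUnitary :
      Matrix β β ℝ)) * (Aᴴ * A) *
      ((Matrix.posSemidef_conjTranspose_mul_self A).1.eigenvectorUnitary : Matrix β β ℝ)
      = Matrix.diagonal (RCLike.ofReal ∘
        (Matrix.posSemidef_conjTranspose_mul_self A).1.eigenvalues) := by
    have := (Matrix.posSemidef_conjTranspose_mul_self A).1.conjStarAlgAut_star_eigenvectorUnitary
    rw [Unitary.conjStarAlgAut_apply, Unitary.coe_star, star_star] at this
    exact this
  have hconv : Aᴴ * A = Aᵀ * A := by rw [conjTranspose_eq_transpose_of_trivial]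
  calc ((Matrix.posSemidef_conjTranspose_mul_self A).1.eigenvectorUnitary : Matrix β β ℝ)ᵀ
        * (Aᵀ * A) * ((Matrix.posSemidef_conjTranspose_mul_self A).1.eigenvectorUnitary :
          Matrix β β ℝ)
      = (star ((Matrix.posSemidef_conjTranspose_mul_self A).1.eigenvectorUnitary : Matrix β β ℝ))
        * (Aᴴ * A) * ((Matrix.posSemidef_conjTranspose_mul_self A).1.eigenvectorUnitary :
          Matrix β β ℝ) := by
        have hstar : star ((Matrix.posSemidef_conjTranspose_mul_self A).1.eigenvectorUnitary :
            Matrix β β ℝ) = ((Matrix.posSemidef_conjTranspose_mul_self A).1.eigenvectorUnitary :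
            Matrix β β ℝ)ᵀ := by
          rw [Matrix.star_eq_conjTranspose, conjTranspose_eq_transpose_of_trivial]
        rw [← hconv, hstar]
    _ = Matrix.diagonal (RCLike.ofReal ∘
          (Matrix.posSemidef_conjTranspose_mul_self A).1.eigenvalues) := h
    _ = Matrix.diagonal ((Matrix.posSemidef_conjTranspose_mul_self A).1.eigenvalues) := by
        simp [RCLike.ofReal_real_eq_id]

lemma nn_eq_sum : nuclearNorm A
    = ∑ i, Real.sqrt ((Matrix.posSemidef_conjTranspose_mul_self A).1.eigenvalues i) := by
  rw [nuclearNorm]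
  rw [Matrix.trace_mul_cycle]
  rw [Unitary.coe_star_mul_self, Matrix.one_mul, Matrix.trace_diagonal]
  simp [RCLike.ofReal_real_eq_id]
end nuclear

section nuclear2
variable {α β : Type*} [Fintype α] [Fintype β] [DecidableEq β]

omit [DecidableEq β] in
lemma dot_cs (x y : α → ℝ) : x ⬝ᵥ y ≤ Real.sqrt (x ⬝ᵥ x) * Real.sqrt (y ⬝ᵥ y) := by
  have h := Finset.sum_mul_sq_le_sq_mul_sq Finset.univ x y
  have hx : x ⬝ᵥ x = ∑ i, x i ^ 2 := by simp [dotProduct, pow_two]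
  have hy : y ⬝ᵥ y = ∑ i, y i ^ 2 := by simp [dotProduct, pow_two]
  calc x ⬝ᵥ y ≤ |x ⬝ᵥ y| := le_abs_self _
    _ = Real.sqrt ((x ⬝ᵥ y) ^ 2) := (Real.sqrt_sq_eq_abs _).symm
    _ ≤ Real.sqrt ((∑ i, x i ^ 2) * (∑ i, y i ^ 2)) := by
        apply Real.sqrt_le_sqrt
        simpa [dotProduct] using h
    _ = Real.sqrt (x ⬝ᵥ x) * Real.sqrt (y ⬝ᵥ y) := by
        rw [hx, hy, Real.sqrt_mul (by positivity)]

omit [DecidableEq β] in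
lemma diag_conj (E X : Matrix β β ℝ) (i : β) :
    (Eᵀ * X * E) i i = (fun k => E k i) ⬝ᵥ (X *ᵥ fun k => E k i) := by
  simp only [Matrix.mul_apply, Matrix.mulVec, dotProduct, Matrix.transpose_apply,
    Finset.sum_mul, Finset.mul_sum]
  rw [Finset.sum_comm]
  exact Finset.sum_congr rfl fun k _ => Finset.sum_congr rfl fun l _ => by ring

omit [DecidableEq β] in
lemma dot_transpose (M : Matrix α β ℝ) (x : β → ℝ) (y : α → ℝ) :
    x ⬝ᵥ (Mᵀ *ᵥ y) = (M *ᵥ x) ⬝ᵥ y := by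
  rw [dotProduct_mulVec, Matrix.vecMul_transpose]

lemma nn_dual_le (A U : Matrix α β ℝ) (hU : (1 - Uᵀ * U).PosSemidef) :
    (Uᵀ * A).trace ≤ nuclearNorm A := by
  set hH := Matrix.posSemidef_conjTranspose_mul_self A with hHdef
  set E : Matrix β β ℝ := (hH.1.eigenvectorUnitary : Matrix β β ℝ) with hEdef
  set lam := hH.1.eigenvalues with hlamdef
  have hE1 : Eᵀ * E = 1 := by
    rw [hEdef, ← conjTranspose_eq_transpose_of_trivial, ← Matrix.star_eq_conjTranspose]
    exact Unitary.coe_star_mul_self _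
  have hE2 : E * Eᵀ = 1 := by
    rw [hEdef, ← conjTranspose_eq_transpose_of_trivial, ← Matrix.star_eq_conjTranspose]
    exact Unitary.coe_mul_star_self _
  have hd : Eᵀ * (Aᵀ * A) * E = Matrix.diagonal lam := hdiag A
  -- trace as sum of diagonal entries of conjugated matrix
  have htr : (Uᵀ * A).trace = ∑ i, (Eᵀ * (Uᵀ * A) * E) i i := by
    have h1 : (Eᵀ * (Uᵀ * A) * E).trace = (Uᵀ * A).trace := by
      rw [Matrix.trace_mul_cycle, ← Matrix.mul_assoc, hE2, Matrix.one_mul]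
    rw [← h1]
    rfl
  rw [htr, nn_eq_sum A]
  apply Finset.sum_le_sum
  intro i _
  have hci : (Eᵀ * (Uᵀ * A) * E) i i = (U *ᵥ fun k => E k i) ⬝ᵥ (A *ᵥ fun k => E k i) := by
    rw [diag_conj, ← Matrix.mulVec_mulVec, dot_transpose]
  have hAnorm : (A *ᵥ fun k => E k i) ⬝ᵥ (A *ᵥ fun k => E k i) = lam i := by
    have h2 := diag_conj E (Aᵀ * A) i
    rw [hd] at h2
    rw [← Matrix.mulVec_mulVec, dot_transpose] at h2
    rw [← h2, Matrix.diagonal_apply_eq]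
  have hcc : (fun k => E k i) ⬝ᵥ (fun k => E k i) = 1 := by
    have h3 : (Eᵀ * E) i i = (fun k => E k i) ⬝ᵥ (fun k => E k i) := by
      simp [Matrix.mul_apply, dotProduct, Matrix.transpose_apply]
    rw [hE1] at h3
    rw [← h3, Matrix.one_apply_eq]
  have hUnorm : (U *ᵥ fun k => E k i) ⬝ᵥ (U *ᵥ fun k => E k i) ≤ 1 := by
    have h4 := hU.dotProduct_mulVec_nonneg (fun k => E k i)
    simp only [Matrix.sub_mulVec, Matrix.one_mulVec, dotProduct_sub] at h4
    rw [← Matrix.mulVec_mulVec, dot_transpose] at h4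
    simp only [star_trivial] at h4
    rw [hcc] at h4
    linarith
  rw [hci]
  calc (U *ᵥ fun k => E k i) ⬝ᵥ (A *ᵥ fun k => E k i)
      ≤ Real.sqrt ((U *ᵥ fun k => E k i) ⬝ᵥ (U *ᵥ fun k => E k i))
        * Real.sqrt ((A *ᵥ fun k => E k i) ⬝ᵥ (A *ᵥ fun k => E k i)) := dot_cs _ _
    _ ≤ 1 * Real.sqrt (lam i) := by
        apply mul_le_mul
        · calc Real.sqrt _ ≤ Real.sqrt 1 := Real.sqrt_le_sqrt hUnorm
            _ = 1 := Real.sqrt_one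
        · rw [hAnorm]
        · exact Real.sqrt_nonneg _
        · norm_num
    _ = Real.sqrt (lam i) := one_mul _
end nuclear2

section nuclear3
variable {α β : Type*} [Fintype α] [Fintype β] [DecidableEq β]

lemma nn_attain (A : Matrix α β ℝ) :
    ∃ U : Matrix α β ℝ, (1 - Uᵀ * U).PosSemidef ∧ (Uᵀ * A).trace = nuclearNorm A := by
  set hH := Matrix.posSemidef_conjTranspose_mul_self A with hHdef
  set E : Matrix β β ℝ := (hH.1.eigenvectorUnitary : Matrix β β ℝ) with hEdef
  set lam := hH.1.eigenvalues with hlamdef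
  have hlamnn : ∀ i, 0 ≤ lam i := fun i => hH.eigenvalues_nonneg i
  have hE1 : Eᵀ * E = 1 := by
    rw [hEdef, ← conjTranspose_eq_transpose_of_trivial, ← Matrix.star_eq_conjTranspose]
    exact Unitary.coe_star_mul_self _
  have hE2 : E * Eᵀ = 1 := by
    rw [hEdef, ← conjTranspose_eq_transpose_of_trivial, ← Matrix.star_eq_conjTranspose]
    exact Unitary.coe_mul_star_self _
  have hd : Eᵀ * (Aᵀ * A) * E = Matrix.diagonal lam := hdiag A
  set g : β → ℝ := fun i => if lam i = 0 then 0 else (Real.sqrt (lam i))⁻¹ with hgdef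
  have hgl : ∀ i, (g * lam * g) i = if lam i = 0 then 0 else 1 := by
    intro i
    simp only [Pi.mul_apply, hgdef]
    by_cases h : lam i = 0
    · simp [h]
    · have hpos : 0 < lam i := lt_of_le_of_ne (hlamnn i) (Ne.symm h)
      have hsq : Real.sqrt (lam i) * Real.sqrt (lam i) = lam i := Real.mul_self_sqrt (hlamnn i)
      have hsqpos : 0 < Real.sqrt (lam i) := Real.sqrt_pos.mpr hpos
      rw [if_neg h, if_neg h, ← hsq]
      field_simp
      rw [Real.sqrt_sq hsqpos.le]
  have hUt : (A * E * Matrix.diagonal g * Eᵀ)ᵀ = E * Matrix.diagonal g * Eᵀ * Aᵀ := by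
    simp [Matrix.transpose_mul, Matrix.diagonal_transpose, Matrix.mul_assoc]
  refine ⟨A * E * Matrix.diagonal g * Eᵀ, ?_, ?_⟩
  · -- PSD of 1 - UᵀU
    have hUtU : (A * E * Matrix.diagonal g * Eᵀ)ᵀ * (A * E * Matrix.diagonal g * Eᵀ)
        = E * Matrix.diagonal (g * lam * g) * Eᵀ := by
      rw [hUt]
      have h0 : E * Matrix.diagonal g * Eᵀ * Aᵀ * (A * E * Matrix.diagonal g * Eᵀ)
          = E * Matrix.diagonal g * (Eᵀ * (Aᵀ * A) * E) * Matrix.diagonal g * Eᵀ := by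
        simp only [Matrix.mul_assoc]
      rw [h0, hd]
      have hgg : Matrix.diagonal g * Matrix.diagonal lam * Matrix.diagonal g
          = Matrix.diagonal (g * lam * g) := by
        rw [Matrix.diagonal_mul_diagonal, Matrix.diagonal_mul_diagonal]
        rfl
      have hassoc : E * Matrix.diagonal g * Matrix.diagonal lam * Matrix.diagonal g
          = E * (Matrix.diagonal g * Matrix.diagonal lam * Matrix.diagonal g) := by
        simp only [Matrix.mul_assoc]
      rw [hassoc, hgg]
    rw [hUtU]
    have h1 : (1 : Matrix β β ℝ) - E * Matrix.diagonal (g * lam * g) * Eᵀ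
        = E * Matrix.diagonal (fun i => 1 - (g * lam * g) i) * Eᵀ := by
      have hone : (1 : Matrix β β ℝ) = E * Matrix.diagonal (fun _ => (1:ℝ)) * Eᵀ := by
        rw [Matrix.diagonal_one, Matrix.mul_one, hE2]
      rw [hone, ← Matrix.sub_mul, ← Matrix.mul_sub, Matrix.diagonal_sub]
    rw [h1]
    have hpsdD : (Matrix.diagonal (fun i => 1 - (g * lam * g) i)).PosSemidef := by
      apply Matrix.PosSemidef.diagonal
      intro i
      show (0:ℝ) ≤ 1 - (g * lam * g) i
      rw [hgl i]
      by_cases h : lam i = 0 <;> simp [h]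
    have := hpsdD.mul_mul_conjTranspose_same E
    rwa [conjTranspose_eq_transpose_of_trivial] at this
  · -- trace equals nuclear norm
    rw [hUt]
    have e0 : E * Matrix.diagonal g * Eᵀ * Aᵀ * A
        = E * (Matrix.diagonal g * Eᵀ * Aᵀ * A) := by
      simp only [Matrix.mul_assoc]
    rw [e0, Matrix.trace_mul_comm]
    have e1 : Matrix.diagonal g * Eᵀ * Aᵀ * A * E
        = Matrix.diagonal g * (Eᵀ * (Aᵀ * A) * E) := by
      simp only [Matrix.mul_assoc]
    rw [e1, hd, Matrix.diagonal_mul_diagonal, Matrix.trace_diagonal, nn_eq_sum A]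
    apply Finset.sum_congr rfl
    intro i _
    show g i * lam i = Real.sqrt (lam i)
    by_cases h : lam i = 0
    · simp [hgdef, h]
    · have hpos : 0 < lam i := lt_of_le_of_ne (hlamnn i) (Ne.symm h)
      have hsqpos : 0 < Real.sqrt (lam i) := Real.sqrt_pos.mpr hpos
      simp only [hgdef, if_neg h]
      rw [← Real.mul_self_sqrt (hlamnn i)]
      field_simp
      rw [Real.sqrt_sq hsqpos.le]
end nuclear3

section nuclear4
variable {α β : Type*} [Fintype α] [Fintype β] [DecidableEq β]

lemma nn_triangle (A B : Matrix α β ℝ) :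
    nuclearNorm (A + B) ≤ nuclearNorm A + nuclearNorm B := by
  obtain ⟨U, hU, hUtr⟩ := nn_attain (A + B)
  rw [← hUtr, Matrix.mul_add, Matrix.trace_add]
  exact add_le_add (nn_dual_le A U hU) (nn_dual_le B U hU)

lemma nn_smul (A : Matrix α β ℝ) {c : ℝ} (hc : 0 ≤ c) :
    nuclearNorm (c • A) = c * nuclearNorm A := by
  obtain ⟨U, hU, hUtr⟩ := nn_attain (c • A)
  obtain ⟨V, hV, hVtr⟩ := nn_attain A
  apply le_antisymm
  · rw [← hUtr, Matrix.mul_smul, Matrix.trace_smul, smul_eq_mul]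
    exact mul_le_mul_of_nonneg_left (nn_dual_le A U hU) hc
  · have := nn_dual_le (c • A) V hV
    rw [Matrix.mul_smul, Matrix.trace_smul, smul_eq_mul, hVtr] at this
    exact this

lemma nn_convex (A B : Matrix α β ℝ) {a b : ℝ} (ha : 0 ≤ a) (hb : 0 ≤ b) :
    nuclearNorm (a • A + b • B) ≤ a * nuclearNorm A + b * nuclearNorm B := by
  calc nuclearNorm (a • A + b • B) ≤ nuclearNorm (a • A) + nuclearNorm (b • B) :=
        nn_triangle _ _
    _ = a * nuclearNorm A + b * nuclearNorm B := by rw [nn_smul A ha, nn_smul B hb]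
end nuclear4
section l1
variable {γ γ' δ : Type*} [Fintype γ] [Fintype γ'] [Fintype δ]

lemma l1_combo (X₁ Y₁ : Matrix γ δ ℝ) (X₂ Y₂ : Matrix γ' δ ℝ) {a b : ℝ}
    (ha : 0 ≤ a) (hb : 0 ≤ b) :
    ∑ i, ∑ j, |Matrix.fromRows (a • X₁ + b • Y₁) (a • X₂ + b • Y₂) i j|
      ≤ a * ∑ i, ∑ j, |Matrix.fromRows X₁ X₂ i j|
        + b * ∑ i, ∑ j, |Matrix.fromRows Y₁ Y₂ i j| := by
  rw [Finset.mul_sum, Finset.mul_sum, ← Finset.sum_add_distrib]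
  apply Finset.sum_le_sum
  intro i _
  rw [Finset.mul_sum, Finset.mul_sum, ← Finset.sum_add_distrib]
  apply Finset.sum_le_sum
  intro j _
  have hentry : Matrix.fromRows (a • X₁ + b • Y₁) (a • X₂ + b • Y₂) i j
      = a * Matrix.fromRows X₁ X₂ i j + b * Matrix.fromRows Y₁ Y₂ i j := by
    cases i <;> simp [Matrix.fromRows_apply_inl, Matrix.fromRows_apply_inr,
      Matrix.add_apply, Matrix.smul_apply, smul_eq_mul]
  rw [hentry]
  calc |a * Matrix.fromRows X₁ X₂ i j + b * Matrix.fromRows Y₁ Y₂ i j|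
      ≤ |a * Matrix.fromRows X₁ X₂ i j| + |b * Matrix.fromRows Y₁ Y₂ i j| := abs_add_le _ _
    _ = a * |Matrix.fromRows X₁ X₂ i j| + b * |Matrix.fromRows Y₁ Y₂ i j| := by
        rw [abs_mul, abs_mul, abs_of_nonneg ha, abs_of_nonneg hb]
end l1

/-- Fix `λ > 0`, `γ > 0`, a positive semidefinite `Σ_Z`, a symmetric
`Σ_X` and any `Σ_ZX`. The full objective of the estimator,
`F(S_X, L_X, S_ZX, L_ZX) = − log det(S_X − L_X) + Tr(Σ_X (S_X − L_X))
  + 2 Tr(Σ_ZX (S_ZX − L_ZX)ᵀ) + Tr((S_X − L_X)⁻¹ (S_ZX − L_ZX)ᵀ Σ_Z (S_ZX − L_ZX))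
  + λ (γ ‖S‖₁ + ‖L‖_*)`,
with `S` (resp. `L`) obtained by stacking `S_X` on top of `S_ZX` (resp. `L_X` on top of
`L_ZX`), is convex on `C := {(S_X, L_X, S_ZX, L_ZX) : S_X, L_X symmetric, S_X − L_X ≻ 0}`. -/
theorem full_objective_convex (p m : ℕ) (hp : 1 ≤ p) (hm : 1 ≤ m)
    (lam gam : ℝ) (hlam : 0 < lam) (hgam : 0 < gam)
    (SigZ : Matrix (Fin m) (Fin m) ℝ) (hSigZ : SigZ.PosSemidef)
    (SigX : Matrix (Fin p) (Fin p) ℝ) (hSigX : SigX.IsSymm)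
    (SigZX : Matrix (Fin m) (Fin p) ℝ) :
    ConvexOn ℝ
      {q : Matrix (Fin p) (Fin p) ℝ × Matrix (Fin p) (Fin p) ℝ ×
          Matrix (Fin m) (Fin p) ℝ × Matrix (Fin m) (Fin p) ℝ |
        q.1.IsSymm ∧ q.2.1.IsSymm ∧ (q.1 - q.2.1).PosDef}
      (fun q =>
        -Real.log (q.1 - q.2.1).det
        + (SigX * (q.1 - q.2.1)).trace
        + 2 * (SigZX * (q.2.2.1 - q.2.2.2)ᵀ).trace
        + ((q.1 - q.2.1)⁻¹ * (q.2.2.1 - q.2.2.2)ᵀ * SigZ * (q.2.2.1 - q.2.2.2)).trace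
        + lam * (gam * (∑ i, ∑ j, |Matrix.fromRows q.1 q.2.2.1 i j|)
            + nuclearNorm (Matrix.fromRows q.2.1 q.2.2.2))) := by
  constructor
  · -- convexity of the set
    intro x hx y hy a b ha hb hab
    obtain ⟨hx1, hx2, hx3⟩ := hx
    obtain ⟨hy1, hy2, hy3⟩ := hy
    refine ⟨?_, ?_, ?_⟩
    · show ((a • x + b • y).1)ᵀ = (a • x + b • y).1
      show (a • x.1 + b • y.1)ᵀ = a • x.1 + b • y.1
      rw [Matrix.transpose_add, Matrix.transpose_smul, Matrix.transpose_smul, hx1.eq, hy1.eq]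
    · show ((a • x + b • y).2.1)ᵀ = (a • x + b • y).2.1
      show (a • x.2.1 + b • y.2.1)ᵀ = a • x.2.1 + b • y.2.1
      rw [Matrix.transpose_add, Matrix.transpose_smul, Matrix.transpose_smul, hx2.eq, hy2.eq]
    · show ((a • x + b • y).1 - (a • x + b • y).2.1).PosDef
      have hD : (a • x + b • y).1 - (a • x + b • y).2.1
          = a • (x.1 - x.2.1) + b • (y.1 - y.2.1) := by
        show a • x.1 + b • y.1 - (a • x.2.1 + b • y.2.1) = _
        module
      rw [hD]
      exact pd_combo hx3 hy3 ha hb hab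
  · -- convexity inequality
    intro x hx y hy a b ha hb hab
    obtain ⟨hx1, hx2, hx3⟩ := hx
    obtain ⟨hy1, hy2, hy3⟩ := hy
    dsimp only
    set A₁ := x.1 - x.2.1 with hA₁def
    set A₂ := y.1 - y.2.1 with hA₂def
    set B₁ := x.2.2.1 - x.2.2.2 with hB₁def
    set B₂ := y.2.2.1 - y.2.2.2 with hB₂def
    have hDA : (a • x + b • y).1 - (a • x + b • y).2.1 = a • A₁ + b • A₂ := by
      show a • x.1 + b • y.1 - (a • x.2.1 + b • y.2.1) = _
      rw [hA₁def, hA₂def]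
      module
    have hDB : (a • x + b • y).2.2.1 - (a • x + b • y).2.2.2 = a • B₁ + b • B₂ := by
      show a • x.2.2.1 + b • y.2.2.1 - (a • x.2.2.2 + b • y.2.2.2) = _
      rw [hB₁def, hB₂def]
      module
    have hq1 : (a • x + b • y).1 = a • x.1 + b • y.1 := rfl
    have hq21 : (a • x + b • y).2.1 = a • x.2.1 + b • y.2.1 := rfl
    have hq221 : (a • x + b • y).2.2.1 = a • x.2.2.1 + b • y.2.2.1 := rfl
    have hq222 : (a • x + b • y).2.2.2 = a • x.2.2.2 + b • y.2.2.2 := rfl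
    rw [hDA, hDB, hq1, hq221, hq21, hq222]
    -- term 1
    have h1 : a * Real.log A₁.det + b * Real.log A₂.det
        ≤ Real.log (a • A₁ + b • A₂).det := logdet_concave hx3 hy3 ha hb hab
    -- term 2
    have h2 : (SigX * (a • A₁ + b • A₂)).trace
        = a * (SigX * A₁).trace + b * (SigX * A₂).trace := by
      rw [Matrix.mul_add, Matrix.mul_smul, Matrix.mul_smul, Matrix.trace_add,
        Matrix.trace_smul, Matrix.trace_smul, smul_eq_mul, smul_eq_mul]
    -- term 3
    have h3 : (SigZX * (a • B₁ + b • B₂)ᵀ).trace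
        = a * (SigZX * B₁ᵀ).trace + b * (SigZX * B₂ᵀ).trace := by
      rw [Matrix.transpose_add, Matrix.transpose_smul, Matrix.transpose_smul,
        Matrix.mul_add, Matrix.mul_smul, Matrix.mul_smul, Matrix.trace_add,
        Matrix.trace_smul, Matrix.trace_smul, smul_eq_mul, smul_eq_mul]
    -- term 4
    have h4 : ((a • A₁ + b • A₂)⁻¹ * (a • B₁ + b • B₂)ᵀ * SigZ * (a • B₁ + b • B₂)).trace
        ≤ a * (A₁⁻¹ * B₁ᵀ * SigZ * B₁).trace + b * (A₂⁻¹ * B₂ᵀ * SigZ * B₂).trace :=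
      frac_convex hx3 hy3 hSigZ B₁ B₂ ha hb hab
    -- term 5 : l1
    have h5 : ∑ i, ∑ j, |Matrix.fromRows (a • x.1 + b • y.1) (a • x.2.2.1 + b • y.2.2.1) i j|
        ≤ a * ∑ i, ∑ j, |Matrix.fromRows x.1 x.2.2.1 i j|
          + b * ∑ i, ∑ j, |Matrix.fromRows y.1 y.2.2.1 i j| := l1_combo _ _ _ _ ha hb
    -- term 5 : nuclear
    have hfr : Matrix.fromRows (a • x.2.1 + b • y.2.1) (a • x.2.2.2 + b • y.2.2.2)
        = a • Matrix.fromRows x.2.1 x.2.2.2 + b • Matrix.fromRows y.2.1 y.2.2.2 := by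
      ext i j
      cases i <;> simp [Matrix.fromRows_apply_inl, Matrix.fromRows_apply_inr,
        Matrix.add_apply, Matrix.smul_apply]
    have h6 : nuclearNorm (Matrix.fromRows (a • x.2.1 + b • y.2.1)
          (a • x.2.2.2 + b • y.2.2.2))
        ≤ a * nuclearNorm (Matrix.fromRows x.2.1 x.2.2.2)
          + b * nuclearNorm (Matrix.fromRows y.2.1 y.2.2.2) := by
      rw [hfr]
      exact nn_convex _ _ ha hb
    have h7 : lam * (gam * (∑ i, ∑ j,
          |Matrix.fromRows (a • x.1 + b • y.1) (a • x.2.2.1 + b • y.2.2.1) i j|)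
          + nuclearNorm (Matrix.fromRows (a • x.2.1 + b • y.2.1) (a • x.2.2.2 + b • y.2.2.2)))
        ≤ a * (lam * (gam * (∑ i, ∑ j, |Matrix.fromRows x.1 x.2.2.1 i j|)
            + nuclearNorm (Matrix.fromRows x.2.1 x.2.2.2)))
          + b * (lam * (gam * (∑ i, ∑ j, |Matrix.fromRows y.1 y.2.2.1 i j|)
            + nuclearNorm (Matrix.fromRows y.2.1 y.2.2.2))) := by
      have hinner : gam * (∑ i, ∑ j,
            |Matrix.fromRows (a • x.1 + b • y.1) (a • x.2.2.1 + b • y.2.2.1) i j|)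
            + nuclearNorm (Matrix.fromRows (a • x.2.1 + b • y.2.1) (a • x.2.2.2 + b • y.2.2.2))
          ≤ a * (gam * (∑ i, ∑ j, |Matrix.fromRows x.1 x.2.2.1 i j|)
              + nuclearNorm (Matrix.fromRows x.2.1 x.2.2.2))
            + b * (gam * (∑ i, ∑ j, |Matrix.fromRows y.1 y.2.2.1 i j|)
              + nuclearNorm (Matrix.fromRows y.2.1 y.2.2.2)) := by
        have := mul_le_mul_of_nonneg_left h5 hgam.le
        nlinarith [h6]
      calc lam * _ ≤ lam * (a * (gam * (∑ i, ∑ j, |Matrix.fromRows x.1 x.2.2.1 i j|)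
              + nuclearNorm (Matrix.fromRows x.2.1 x.2.2.2))
            + b * (gam * (∑ i, ∑ j, |Matrix.fromRows y.1 y.2.2.1 i j|)
              + nuclearNorm (Matrix.fromRows y.2.1 y.2.2.2))) :=
            mul_le_mul_of_nonneg_left hinner hlam.le
        _ = _ := by ring
    simp only [smul_eq_mul]
    linarith [h1, h2, h3, h4, h7]
end
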